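/- For every nonnegative integer n, S_n^{(r,k)}(x|a_1,…,a_r) = Σ_{l=0}^n ( Σ_{j=l}^n Σ_{m=0}^{n−j} (−1)^{n−m−j} C(n,j) C(j,l) (m!/(m+1)^k) S_2(n−j,m) B_{j−l}(a_1,…,a_r) ) x^l, as an identity of polynomials in x. -/

import Mathlib

/-!
Dividing the two generating functions gives `egf S = G(t) · egf B`, where
`G(t) = Li_k(1 - e^{-t}) / (1 - e^{-t}) = ∑ₘ (1 - e^{-t})^m / (m + 1)^k`, and the coefficients of
`(1 - e^{-t})^m = (-1)^m (e^{-t} - 1)^m` are signed Stirling numbers of the second kind. The factor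
`e^{xt}` makes the Barnes polynomials an Appell sequence, `B_j(x) = ∑_l C(j,l) B_{j-l} x^l`, and
composing the two binomial convolutions gives the double sum.
-/

open PowerSeries Finset

/-- The formal power series `e^{c·t}` over a commutative `ℚ`-algebra `R`. -/
noncomputable def expS {R : Type*} [CommRing R] [Algebra ℚ R] (c : R) : PowerSeries R :=
  PowerSeries.rescale c (PowerSeries.exp R)

/-- The formal power series `Li_k(1 - e^{-t})` over `ℂ`, where
`Li_k(z) = ∑_{m ≥ 1} z^m / m^k` is the `k`-th polylogarithm.  Since `1 - e^{-t}`
has order `1`, the coefficient of `t^n` only involves the terms with `1 ≤ m ≤ n`. -/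
noncomputable def Lik (k : ℤ) : PowerSeries ℂ :=
  PowerSeries.mk fun n => ∑ m ∈ Finset.Icc 1 n,
    ((m : ℂ) ^ k)⁻¹ * PowerSeries.coeff n ((1 - expS (-1 : ℂ)) ^ m)

/-- The exponential generating function `∑_n p n · t^n / n!` of a sequence of
complex polynomials. -/
noncomputable def egf (p : ℕ → Polynomial ℂ) : PowerSeries (Polynomial ℂ) :=
  PowerSeries.mk fun n => ((n.factorial : ℂ))⁻¹ • p n

section expS

variable {R : Type*} [CommRing R] [Algebra ℚ R]

lemma coeff_expS (c : R) (n : ℕ) :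
    coeff n (expS c) = c ^ n * algebraMap ℚ R (1 / n.factorial) := by
  simp [expS, coeff_rescale, coeff_exp]

lemma constantCoeff_expS (c : R) : constantCoeff (expS c) = 1 := by
  simp [← coeff_zero_eq_constantCoeff_apply, coeff_expS]

lemma coeff_one_expS (c : R) : coeff 1 (expS c) = c := by
  simp [coeff_expS]

lemma expS_zero : expS (0 : R) = 1 := by
  simp [expS, constantCoeff_exp]

lemma map_expS {S : Type*} [CommRing S] [Algebra ℚ S] (f : R →+* S) (c : R) :
    map f (expS c) = expS (f c) := by
  ext n
  simp [coeff_expS, RingHom.map_rat_algebraMap]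

lemma expS_ne_zero [Nontrivial R] (c : R) : expS c ≠ 0 := fun h => by
  simpa [h] using constantCoeff_expS c

lemma one_sub_expS_neg_one_ne_zero [Nontrivial R] : (1 : R⟦X⟧) - expS (-1) ≠ 0 := fun h => by
  simpa [coeff_one, coeff_one_expS] using congrArg (coeff 1) h

end expS

section powSum

variable {R : Type*} [CommRing R]

lemma coeff_pow_eq_zero_of_lt {f : R⟦X⟧} (hf : constantCoeff f = 0) {n m : ℕ} (h : n < m) :
    coeff n (f ^ m) = 0 :=
  X_pow_dvd_iff.mp (pow_dvd_pow_of_dvd (X_dvd_iff.mpr hf) m) n h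

/-- The formal sum `∑ₘ w m * P ^ m`, truncated to `m ≤ n` in degree `n`; the truncation is exact
when `P` has no constant term. -/
noncomputable def powSum (P : R⟦X⟧) (w : ℕ → R) : R⟦X⟧ :=
  mk fun n => ∑ m ∈ range (n + 1), w m * coeff n (P ^ m)

lemma coeff_powSum_eq_sum_range {P : R⟦X⟧} (hP : constantCoeff P = 0) (w : ℕ → R)
    {n N : ℕ} (hn : n < N) : coeff n (powSum P w) = ∑ m ∈ range N, w m * coeff n (P ^ m) := by
  rw [powSum, coeff_mk]
  refine sum_subset (range_subset_range.mpr hn) fun m hmN hmn => ?_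
  rw [coeff_pow_eq_zero_of_lt hP (by simpa using hmn), mul_zero]

lemma mul_powSum {P : R⟦X⟧} (hP : constantCoeff P = 0) (w : ℕ → R) :
    P * powSum P w = mk fun n => ∑ m ∈ range (n + 1), w m * coeff n (P ^ (m + 1)) := by
  ext n
  rw [coeff_mk]
  have hle : ∀ ij ∈ antidiagonal n, ij.2 < n + 1 := fun ij hij => by
    have := mem_antidiagonal.mp hij; omega
  calc coeff n (P * powSum P w)
      = ∑ ij ∈ antidiagonal n, coeff ij.1 P * ∑ m ∈ range (n + 1), w m * coeff ij.2 (P ^ m) := by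
        rw [coeff_mul]
        exact sum_congr rfl fun ij hij => by rw [coeff_powSum_eq_sum_range hP w (hle ij hij)]
    _ = ∑ m ∈ range (n + 1), w m * coeff n (P ^ (m + 1)) := by
        simp_rw [mul_sum, pow_succ', coeff_mul (n := n) P, mul_sum]
        rw [sum_comm]
        exact sum_congr rfl fun m _ => sum_congr rfl fun ij _ => by ring

end powSum

lemma Lik_eq_mul_powSum (k : ℤ) :
    Lik k = (1 - expS (-1 : ℂ)) * powSum (1 - expS (-1 : ℂ)) fun m => (((m : ℂ) + 1) ^ k)⁻¹ := by
  have hP : constantCoeff (1 - expS (-1 : ℂ)) = 0 := by simp [constantCoeff_expS]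
  rw [mul_powSum hP]
  ext n
  rw [Lik, coeff_mk, coeff_mk, sum_range_succ, coeff_pow_eq_zero_of_lt hP n.lt_succ_self,
    mul_zero, add_zero, ← Ico_add_one_right_eq_Icc, sum_Ico_eq_sum_range, add_tsub_cancel_right]
  exact sum_congr rfl fun m _ => by push_cast; ring_nf

lemma coeff_one_sub_expS_neg_one_pow {m : ℕ} {s : ℕ → ℂ}
    (hs : (exp ℂ - 1) ^ m = (m.factorial : ℂ) • mk fun l => s l / (l.factorial : ℂ)) (p : ℕ) :
    coeff p ((1 - expS (-1 : ℂ)) ^ m) = (-1) ^ (p + m) * m.factorial * s p / p.factorial := by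
  have hneg : 1 - expS (-1 : ℂ) = -rescale (-1 : ℂ) (exp ℂ - 1) := by
    rw [map_sub, map_one, expS, neg_sub]
  have hsign : (-1 : ℂ⟦X⟧) ^ m = C ((-1) ^ m) := by simp
  rw [hneg, neg_pow, hsign, ← map_pow, hs, coeff_C_mul, coeff_rescale, coeff_smul, coeff_mk,
    smul_eq_mul]
  ring

lemma factorial_mul_coeff_powSum {s : ℕ → ℕ → ℂ}
    (hs : ∀ m, (exp ℂ - 1) ^ m = (m.factorial : ℂ) • mk fun l => s l m / (l.factorial : ℂ))
    (w : ℕ → ℂ) (p : ℕ) :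
    p.factorial * coeff p (powSum (1 - expS (-1 : ℂ)) w)
      = ∑ m ∈ range (p + 1), (-1) ^ (p - m) * m.factorial * w m * s p m := by
  rw [powSum, coeff_mk, mul_sum]
  refine sum_congr rfl fun m hm => ?_
  have hmp : p + m = p - m + 2 * m := by have := mem_range.mp hm; omega
  rw [coeff_one_sub_expS_neg_one_pow (hs m), hmp, pow_add, pow_mul, neg_one_sq, one_pow, mul_one]
  field_simp [Nat.cast_ne_zero.mpr p.factorial_ne_zero]

section egf

lemma factorial_smul_coeff_egf (p : ℕ → Polynomial ℂ) (n : ℕ) :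
    (n.factorial : ℂ) • coeff n (egf p) = p n := by
  rw [egf, coeff_mk, smul_smul, mul_inv_cancel₀ (Nat.cast_ne_zero.mpr n.factorial_ne_zero),
    one_smul]

lemma egf_injective : Function.Injective egf := fun p q h => funext fun n => by
  rw [← factorial_smul_coeff_egf p, h, factorial_smul_coeff_egf]

lemma egf_mul (p q : ℕ → Polynomial ℂ) :
    egf p * egf q = egf fun n => ∑ j ∈ range (n + 1), (n.choose j : ℂ) • (p j * q (n - j)) := by
  ext n : 1
  simp only [egf, coeff_mul, Nat.sum_antidiagonal_eq_sum_range_succ_mk, coeff_mk, smul_sum]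
  refine sum_congr rfl fun j hj => ?_
  have hjn : j ≤ n := Nat.lt_succ_iff.mp (mem_range.mp hj)
  rw [smul_mul_smul_comm, smul_smul, Nat.cast_choose ℂ hjn]
  field_simp [Nat.cast_ne_zero.mpr (Nat.factorial_ne_zero _)]

lemma map_C_eq_egf (F : ℂ⟦X⟧) :
    map Polynomial.C F = egf fun n => Polynomial.C (n.factorial * coeff n F) := by
  ext n : 1
  rw [coeff_map, egf, coeff_mk, Polynomial.smul_C, smul_eq_mul,
    inv_mul_cancel_left₀ (Nat.cast_ne_zero.mpr n.factorial_ne_zero)]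

lemma expS_X_eq_egf : expS Polynomial.X = egf fun n => Polynomial.X ^ n := by
  ext n : 1
  rw [coeff_expS, egf, coeff_mk, Polynomial.algebraMap_apply, Polynomial.smul_eq_C_mul, mul_comm]
  simp

end egf

lemma eq_map_C_mul_expS_X {R : Type*} [CommRing R] [IsDomain R] [Algebra ℚ R]
    {A H : R⟦X⟧} {F : (Polynomial R)⟦X⟧} (hA : map Polynomial.C A ≠ 0)
    (h : map Polynomial.C A * F = map Polynomial.C H * expS Polynomial.X) :
    F = map Polynomial.C (map (Polynomial.evalRingHom 0) F) * expS Polynomial.X := by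
  have hmapC : ∀ B : R⟦X⟧, map (Polynomial.evalRingHom 0) (map Polynomial.C B) = B := fun B => by
    ext n; simp
  have hH : A * map (Polynomial.evalRingHom 0) F = H := by
    simpa [hmapC, map_expS, expS_zero] using congrArg (map (Polynomial.evalRingHom 0)) h
  refine mul_left_cancel₀ hA ?_
  rw [h, ← hH, map_mul, mul_assoc]

lemma map_C_map_eval_zero_egf (p : ℕ → Polynomial ℂ) :
    map Polynomial.C (map (Polynomial.evalRingHom 0) (egf p))
      = egf fun n => Polynomial.C ((p n).eval 0) := by
  rw [map_C_eq_egf]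
  congr! 3 with n
  rw [coeff_map, ← factorial_smul_coeff_egf p n, Polynomial.eval_smul, smul_eq_mul,
    Polynomial.coe_evalRingHom]

lemma sum_choose_smul_mul_C_eq_sum_C_mul_X_pow {B : ℕ → Polynomial ℂ} {b : ℕ → ℂ}
    (hB : ∀ j, B j = ∑ l ∈ range (j + 1),
      (j.choose l : ℂ) • (Polynomial.X ^ l * Polynomial.C (b (j - l))))
    (g : ℕ → ℂ) (n : ℕ) :
    ∑ j ∈ range (n + 1), (n.choose j : ℂ) • (B j * Polynomial.C (g (n - j)))
      = ∑ l ∈ range (n + 1), Polynomial.C (∑ j ∈ Icc l n,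
          (n.choose j : ℂ) * j.choose l * g (n - j) * b (j - l)) * Polynomial.X ^ l := by
  have hterm : ∀ j ∈ range (n + 1), (n.choose j : ℂ) • (B j * Polynomial.C (g (n - j)))
      = ∑ l ∈ range (j + 1), Polynomial.C ((n.choose j : ℂ) * j.choose l * g (n - j) * b (j - l))
          * Polynomial.X ^ l := fun j _ => by
    rw [hB j, sum_mul, smul_sum]
    refine sum_congr rfl fun l _ => ?_
    simp only [Polynomial.smul_eq_C_mul, map_mul]
    ring
  rw [sum_congr rfl hterm, sum_comm' (t' := range (n + 1)) (s' := fun l => Icc l n)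
    (fun j l => by simp only [mem_range, mem_Icc]; omega)]
  exact sum_congr rfl fun l _ => by rw [map_sum, sum_mul]

section Barnes

variable {r : ℕ} {a : Fin r → ℂ} {Bp : ℕ → Polynomial ℂ}

lemma prod_expS_sub_one_ne_zero
    (hB : (X : (Polynomial ℂ)⟦X⟧) ^ r * expS Polynomial.X
      = (∏ j, (expS (Polynomial.C (a j)) - 1)) * egf Bp) :
    ∏ j, (expS (Polynomial.C (a j)) - 1) ≠ 0 :=
  left_ne_zero_of_mul (hB ▸ mul_ne_zero (pow_ne_zero _ X_ne_zero) (expS_ne_zero _))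

lemma eq_sum_choose_smul_X_pow_mul_C_eval_zero
    (hB : (X : (Polynomial ℂ)⟦X⟧) ^ r * expS Polynomial.X
      = (∏ j, (expS (Polynomial.C (a j)) - 1)) * egf Bp) (j : ℕ) :
    Bp j = ∑ l ∈ range (j + 1),
      (j.choose l : ℂ) • (Polynomial.X ^ l * Polynomial.C ((Bp (j - l)).eval 0)) := by
  have hprod : map Polynomial.C (∏ j, (expS (a j) - 1))
      = ∏ j, (expS (Polynomial.C (a j)) - 1) := by
    simp [map_prod, map_expS]
  have happell : egf Bp = map Polynomial.C (map (Polynomial.evalRingHom 0) (egf Bp))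
      * expS Polynomial.X :=
    eq_map_C_mul_expS_X (hprod ▸ prod_expS_sub_one_ne_zero hB) (H := X ^ r)
      (by rw [hprod, ← hB]; simp)
  rw [map_C_map_eval_zero_egf, expS_X_eq_egf, mul_comm, egf_mul] at happell
  exact congrFun (egf_injective happell) j

lemma egf_eq_map_C_powSum_mul_egf {k : ℤ} {S : ℕ → Polynomial ℂ}
    (hS : (X : (Polynomial ℂ)⟦X⟧) ^ r * map Polynomial.C (Lik k) * expS Polynomial.X
      = (∏ j, (expS (Polynomial.C (a j)) - 1)) * (1 - expS (-1 : Polynomial ℂ)) * egf S)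
    (hB : (X : (Polynomial ℂ)⟦X⟧) ^ r * expS Polynomial.X
      = (∏ j, (expS (Polynomial.C (a j)) - 1)) * egf Bp) :
    egf S = map Polynomial.C (powSum (1 - expS (-1 : ℂ)) fun m => (((m : ℂ) + 1) ^ k)⁻¹)
      * egf Bp := by
  refine mul_left_cancel₀ (mul_ne_zero (prod_expS_sub_one_ne_zero hB)
    one_sub_expS_neg_one_ne_zero) ?_
  rw [← hS, Lik_eq_mul_powSum]
  simp only [map_mul, map_sub, map_one, map_expS, map_neg]
  linear_combination (1 - expS (-1 : Polynomial ℂ))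
    * map Polynomial.C (powSum (1 - expS (-1 : ℂ)) fun m => (((m : ℂ) + 1) ^ k)⁻¹) * hB

end Barnes

theorem stmt3_general (r : ℕ) (k : ℤ) (a : Fin r → ℂ)
    (S Bp : ℕ → Polynomial ℂ) (S2 : ℕ → ℕ → ℂ)
    -- `S n` is the mixed-type polynomial `S_n^{(r,k)}(x|a_1,…,a_r)`:
    (hS : (PowerSeries.X : PowerSeries (Polynomial ℂ)) ^ r
        * PowerSeries.map Polynomial.C (Lik k) * expS Polynomial.X
        = (∏ j, (expS (Polynomial.C (a j)) - 1)) * (1 - expS (-1 : Polynomial ℂ)) * egf S)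
    -- `Bp n` is the Barnes' multiple Bernoulli polynomial `B_n(x|a_1,…,a_r)`:
    (hB : (PowerSeries.X : PowerSeries (Polynomial ℂ)) ^ r * expS Polynomial.X
        = (∏ j, (expS (Polynomial.C (a j)) - 1)) * egf Bp)
    -- `S2 l m` is the Stirling number of the second kind, defined by
    -- `(e^t - 1)^m = m! ∑_{l ≥ m} S2(l,m) t^l / l!`:
    (hS2 : ∀ m, (PowerSeries.exp ℂ - 1) ^ m
        = (m.factorial : ℂ) • PowerSeries.mk (fun l => S2 l m / (l.factorial : ℂ)))
    (n : ℕ) :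
    S n = ∑ l ∈ Finset.range (n + 1),
      Polynomial.C (∑ j ∈ Finset.Icc l n, ∑ m ∈ Finset.range (n - j + 1),
          (-1 : ℂ) ^ (n - m - j) * (n.choose j : ℂ) * (j.choose l : ℂ)
            * (m.factorial : ℂ) * (((m : ℂ) + 1) ^ k)⁻¹ * S2 (n - j) m
            * (Bp (j - l)).eval 0)
        * Polynomial.X ^ l := by
  set G := powSum (1 - expS (-1 : ℂ)) fun m => (((m : ℂ) + 1) ^ k)⁻¹
  have hSn : S n = ∑ j ∈ range (n + 1),
      (n.choose j : ℂ) • (Bp j * Polynomial.C ((n - j).factorial * coeff (n - j) G)) := by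
    have hegf := egf_eq_map_C_powSum_mul_egf hS hB
    rw [map_C_eq_egf, mul_comm, egf_mul] at hegf
    exact congrFun (egf_injective hegf) n
  rw [hSn, sum_choose_smul_mul_C_eq_sum_C_mul_X_pow (b := fun i => (Bp i).eval 0)
    (eq_sum_choose_smul_X_pow_mul_C_eval_zero hB) (fun p => p.factorial * coeff p G)]
  refine sum_congr rfl fun l _ => ?_
  congr 2
  refine sum_congr rfl fun j _ => ?_
  rw [factorial_mul_coeff_powSum hS2, mul_sum, sum_mul]
  refine sum_congr rfl fun m _ => ?_
  rw [Nat.sub_right_comm]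
  ring

theorem stmt3 (r : ℕ) (hr : 0 < r) (k : ℤ) (a : Fin r → ℂ) (ha : ∀ j, a j ≠ 0)
    (S Bp : ℕ → Polynomial ℂ) (S2 : ℕ → ℕ → ℂ)
    -- `S n` is the mixed-type polynomial `S_n^{(r,k)}(x|a_1,…,a_r)`:
    (hS : (PowerSeries.X : PowerSeries (Polynomial ℂ)) ^ r
        * PowerSeries.map Polynomial.C (Lik k) * expS Polynomial.X
        = (∏ j, (expS (Polynomial.C (a j)) - 1)) * (1 - expS (-1 : Polynomial ℂ)) * egf S)
    -- `Bp n` is the Barnes' multiple Bernoulli polynomial `B_n(x|a_1,…,a_r)`: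
    (hB : (PowerSeries.X : PowerSeries (Polynomial ℂ)) ^ r * expS Polynomial.X
        = (∏ j, (expS (Polynomial.C (a j)) - 1)) * egf Bp)
    -- `S2 l m` is the Stirling number of the second kind, defined by
    -- `(e^t - 1)^m = m! ∑_{l ≥ m} S2(l,m) t^l / l!`:
    (hS2 : ∀ m, (PowerSeries.exp ℂ - 1) ^ m
        = (m.factorial : ℂ) • PowerSeries.mk (fun l => S2 l m / (l.factorial : ℂ)))
    (n : ℕ) :
    S n = ∑ l ∈ Finset.range (n + 1),
      Polynomial.C (∑ j ∈ Finset.Icc l n, ∑ m ∈ Finset.range (n - j + 1),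
          (-1 : ℂ) ^ (n - m - j) * (n.choose j : ℂ) * (j.choose l : ℂ)
            * (m.factorial : ℂ) * (((m : ℂ) + 1) ^ k)⁻¹ * S2 (n - j) m
            * (Bp (j - l)).eval 0)
        * Polynomial.X ^ l :=
  stmt3_general r k a S Bp S2 hS hB hS2 n
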